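/- arXiv:1209.1435 — 2 statements merged into one kernel-verified Lean document; each statement's English description precedes it below -/
import Mathlib

section
/- Let a, r : L → A, R be maps of sets admitting a proper domain cycle (x₀, …, x_{2k+1}). Define γ : {0,1} × L → L as the second projection, descent data ξ^r relative to r by ξ^r_{x,x'}(b,x) = (b,x') for r(x) = r(x'), and descent data ξ^a relative to a by ξ^a_{x₀,x}(b,x₀) = (b,x) if x ≠ x₁ and (1−b,x₁) if x = x₁, extended by ξ^a_{x,x'} = ξ^a_{x₀,x'} ∘ (ξ^a_{x₀,x})^{-1} on the class of x₀ and identity-on-first-coordinate elsewhere. Then ξ^a and ξ^r are valid descent data (satisfy neutrality and associativity), and the composite ξ^r_{x_{2k+1},x₀} ∘ ξ^a_{x_{2k},x_{2k+1}} ∘ ⋯ ∘ ξ^r_{x₁,x₂} ∘ ξ^a_{x₀,x₁} sends (0,x₀) to (1,x₀), hence is not the identity. -/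
open scoped Classical

/-- Descent data in `SET` for `γ` relative to `p`, as a compatible family of maps
between the fibres of `γ`. -/
structure DescentFamily {E B C : Type*} (p : E → B) (γ : C → E) where
  map : ∀ (e e' : E), p e = p e' → {c : C // γ c = e} → {c : C // γ c = e'}
  refl : ∀ e (c : {c : C // γ c = e}), map e e rfl c = c
  comp : ∀ (e e' e'' : E) (h : p e = p e') (h' : p e' = p e'') (c : {c : C // γ c = e}),
    map e' e'' h' (map e e' h c) = map e e'' (h.trans h') c

/-- A domain cycle of `a` and `r` (indices mod `2k+2`). -/
def IsDomainCycle {L A R : Type*} (a : L → A) (r : L → R) (k : ℕ)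
    (x : ZMod (2 * k + 2) → L) : Prop :=
  (∀ j : ZMod (2 * k + 2), x j ≠ x (j + 1)) ∧
  (∀ i : ℕ, i ≤ k →
    a (x ((2 * i : ℕ) : ZMod (2 * k + 2))) = a (x ((2 * i + 1 : ℕ) : ZMod (2 * k + 2)))) ∧
  (∀ i : ℕ, i ≤ k →
    r (x ((2 * i + 1 : ℕ) : ZMod (2 * k + 2))) = r (x ((2 * i + 2 : ℕ) : ZMod (2 * k + 2))))

/-- The composite of the fibre bijections of `ξᵃ` and `ξʳ` along the first `m` steps
of the (cyclically indexed) sequence `z`, starting in the fibre over `z 0` and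
alternating between `ξᵃ` (even steps) and `ξʳ` (odd steps). -/
def chain {L A R : Type*} (a : L → A) (r : L → R) {n : ℕ}
    (ξa : DescentFamily a (Prod.snd : Bool × L → L))
    (ξr : DescentFamily r (Prod.snd : Bool × L → L))
    (z : ZMod n → L)
    (hstep : ∀ m : ℕ, (Even m → a (z (m : ℕ)) = a (z ((m + 1 : ℕ)))) ∧
      (¬ Even m → r (z (m : ℕ)) = r (z ((m + 1 : ℕ))))) :
    ∀ m : ℕ, {c : Bool × L // c.2 = z ((0 : ℕ) : ZMod n)} →
      {c : Bool × L // c.2 = z ((m : ℕ) : ZMod n)}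
  | 0 => id
  | (m + 1) => fun c =>
      if h : Even m then
        ξa.map (z (m : ℕ)) (z ((m + 1 : ℕ))) ((hstep m).1 h) (chain a r ξa ξr z hstep m c)
      else
        ξr.map (z (m : ℕ)) (z ((m + 1 : ℕ))) ((hstep m).2 h) (chain a r ξa ξr z hstep m c)

/-!
Twisting the trivial descent data on `Bool × L` by a potential `f : L → Bool`, i.e. letting
`ξ_{x,x'}` act on the `Bool` component by `b ↦ b ⊕ f x ⊕ f x'`, always gives descent data.
Take the trivial data for `r` and the twist by the indicator of `x₁` for `a`. Going around the
cycle, the `r`-steps never change the `Bool` component, and an `a`-step `x_{2i} → x_{2i+1}`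
changes it exactly when one of its endpoints is `x₁`; since the cycle is proper, this happens
only at the first step, so the composite flips `false` to `true`.
-/

def xorDescent {E B : Type*} (p : E → B) (f : E → Bool) :
    DescentFamily p (Prod.snd : Bool × E → E) where
  map e e' _ c := ⟨(c.1.1 ^^ f e ^^ f e', e'), rfl⟩
  refl := by
    rintro e ⟨⟨b, _⟩, rfl⟩
    simp
  comp := by
    rintro e e' e'' - - ⟨⟨b, _⟩, rfl⟩
    simp

@[simp]
lemma xorDescent_map_coe {E B : Type*} (p : E → B) (f : E → Bool) (e e' : E) (h : p e = p e')
    (c : {c : Bool × E // c.2 = e}) :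
    ((xorDescent p f).map e e' h c : Bool × E) = (c.1.1 ^^ f e ^^ f e', e') :=
  rfl

lemma Function.Injective.natCast_zmod_eq_iff {L : Type*} {n : ℕ} {z : ZMod n → L}
    (hz : Function.Injective z) {m m' : ℕ} (hm : m < n) (hm' : m' < n) :
    z m = z m' ↔ m = m' := by
  rw [hz.eq_iff, ZMod.natCast_eq_natCast_iff', Nat.mod_eq_of_lt hm, Nat.mod_eq_of_lt hm']

lemma chain_xorDescent_indicator {L A R : Type*} (a : L → A) (r : L → R) {n : ℕ}
    (hn : Even n) (z : ZMod n → L) (hz : Function.Injective z)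
    (hstep : ∀ m : ℕ, (Even m → a (z (m : ℕ)) = a (z ((m + 1 : ℕ)))) ∧
      (¬ Even m → r (z (m : ℕ)) = r (z ((m + 1 : ℕ)))))
    (b : Bool) {m : ℕ} (hm : m ≤ n) :
    (chain a r (xorDescent a (fun x => decide (x = z ((1 : ℕ) : ZMod n))))
        (xorDescent r (fun _ => false)) z hstep m ⟨(b, z ((0 : ℕ) : ZMod n)), rfl⟩ : Bool × L) =
      (b ^^ decide (0 < m), z m) := by
  induction m with
  | zero => simp [chain]
  | succ m ih =>
    rw [chain]
    split_ifs with hme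
    · -- `m + 1 = n` is excluded by parity, so both endpoints are compared with `z 1` inside `[0, n)`
      have hm1 : m + 1 < n := by
        rcases hn with ⟨i, rfl⟩; rcases hme with ⟨j, rfl⟩; omega
      have hzm : z m = z ((1 : ℕ) : ZMod n) ↔ m = 1 := hz.natCast_zmod_eq_iff (by omega) (by omega)
      have hzm' : z ((m + 1 : ℕ) : ZMod n) = z ((1 : ℕ) : ZMod n) ↔ m = 0 := by
        rw [hz.natCast_zmod_eq_iff hm1 (by omega)]; omega
      have hm_ne_one : m ≠ 1 := by rintro rfl; exact Nat.not_even_one hme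
      rw [xorDescent_map_coe, ih (by omega)]
      simp only [hzm, hzm', hm_ne_one, decide_false, Bool.xor_false]
      rcases Nat.eq_zero_or_pos m with rfl | hpos
      · simp
      · simp [hpos, hpos.ne']
    · have hpos : 0 < m := Nat.pos_of_ne_zero (by rintro rfl; simp at hme)
      rw [xorDescent_map_coe, ih (by omega)]
      simp [hpos]

/-- given a proper domain cycle `(x₀, …, x_{2k+1})` of `a` and `r`,
with `γ : Bool × L → L` the second projection there are descent data `ξʳ` relative to
`r` acting identically on the `Bool` component, and `ξᵃ` relative to `a` acting
identically on the `Bool` component except for swapping it on the pair `(x₀, x₁)`,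
such that the composite of the fibre bijections around the cycle sends `(false, x₀)`
to `(true, x₀)` — hence is not the identity. -/
theorem proper_cycle_noncoherent_descent_data {L A R : Type*} (a : L → A) (r : L → R)
    (k : ℕ) (z : ZMod (2 * k + 2) → L)
    (hz : IsDomainCycle a r k z) (hproper : Function.Injective z) :
    ∃ (ξa : DescentFamily a (Prod.snd : Bool × L → L))
      (ξr : DescentFamily r (Prod.snd : Bool × L → L)),
      (∀ (x x' : L) (h : r x = r x') (b : Bool),
        (ξr.map x x' h ⟨(b, x), rfl⟩ : Bool × L) = (b, x')) ∧
      (∀ (y : L) (h : a (z ((0 : ℕ) : ZMod (2 * k + 2))) = a y) (b : Bool),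
        (ξa.map (z ((0 : ℕ) : ZMod (2 * k + 2))) y h ⟨(b, z ((0 : ℕ) : ZMod (2 * k + 2))), rfl⟩ : Bool × L) =
          if y = z ((1 : ℕ) : ZMod (2 * k + 2)) then (!b, y) else (b, y)) ∧
      (∀ (y y' : L) (h : a y = a y'), a y ≠ a (z ((0 : ℕ) : ZMod (2 * k + 2))) →
        ∀ b : Bool, (ξa.map y y' h ⟨(b, y), rfl⟩ : Bool × L) = (b, y')) ∧
      (∀ hstep : ∀ m : ℕ, (Even m → a (z (m : ℕ)) = a (z ((m + 1 : ℕ)))) ∧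
          (¬ Even m → r (z (m : ℕ)) = r (z ((m + 1 : ℕ)))),
        (chain a r ξa ξr z hstep (2 * k + 2)
            ⟨(false, z ((0 : ℕ) : ZMod (2 * k + 2))), rfl⟩ : Bool × L) =
          (true, z ((0 : ℕ) : ZMod (2 * k + 2)))) := by
  set x₀ := z ((0 : ℕ) : ZMod (2 * k + 2))
  set x₁ := z ((1 : ℕ) : ZMod (2 * k + 2))
  have hx₀₁ : x₀ ≠ x₁ := by simpa [x₀, x₁] using hz.1 0
  have ha₀₁ : a x₀ = a x₁ := by simpa [x₀, x₁] using hz.2.1 0 k.zero_le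
  refine ⟨xorDescent a (fun x => decide (x = x₁)), xorDescent r (fun _ => false),
    fun x x' h b => by simp, fun y h b => ?_, fun y y' h hne b => ?_, fun hstep => ?_⟩
  · rw [xorDescent_map_coe, decide_eq_false hx₀₁]
    split_ifs with hy <;> simp [hy]
  · have hy : y ≠ x₁ := by rintro rfl; exact hne ha₀₁.symm
    have hy' : y' ≠ x₁ := by rintro rfl; exact hne (h.trans ha₀₁.symm)
    simp [hy, hy']
  · rw [chain_xorDescent_indicator a r ⟨k + 1, by omega⟩ z hproper hstep false le_rfl]
    simp
end

section
/- Let a : L → A and r : L → R be maps of sets, s : L → S with ker(s) the equivalence relation generated by ker(a) ∪ ker(r), and suppose a and r have no domain cycles. Given descent data ξ^τ relative to a and ξ^β relative to r for a common γ : I → L, for any alternating sequence (y₀, …, y_m) (consecutive pairs alternately in ker(a) and ker(r)) the composite bijection ξ_σ : γ⁻¹(y₀) → γ⁻¹(y_m) built by composing the corresponding components of ξ^τ and ξ^β depends only on (y₀, y_m) and not on the chosen alternating sequence; hence ξ^τ and ξ^β extend to a unique common descent data relative to s. -/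
/-!
Descent data relative to `p` amounts to an equivalence relation on `I` whose classes meet the
fibres of `γ` over each `p`-class exactly once. Both claims therefore reduce to one fact: if
`c` and `c'` lie over the same point of `L` and are joined by a chain of `ξτ`- and `ξβ`-steps,
then `c = c'`. Induct on the length of the chain: a step inside one fibre is trivial and can be
dropped, two consecutive steps of the same kind merge into one, and if the first and the last
step have the same kind the last one can be spliced into the first. A chain to which none of
this applies alternates strictly, and its image in `L` is a domain cycle.
-/

open scoped Classical

/-- `a` and `r` have no domain cycle. -/
def SeparatedKernels {L A R : Type*} (a : L → A) (r : L → R) : Prop :=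
  ¬ ∃ (k : ℕ) (x : ZMod (2 * k + 2) → L), IsDomainCycle a r k x

/-- `y 0, …, y m` is an alternating sequence of `a` and `r`: consecutive pairs lie
alternately in `ker a` and `ker r`; `b = true` means the sequence starts with a
`ker a`-step, `b = false` that it starts with a `ker r`-step. -/
def AltSeq {L A R : Type*} (a : L → A) (r : L → R) (b : Bool) (m : ℕ) (y : ℕ → L) : Prop :=
  ∀ i < m, if (decide (i % 2 = 0)) = b then a (y i) = a (y (i + 1))
           else r (y i) = r (y (i + 1))

/-- The composite bijection `ξ_σ : γ⁻¹(y 0) → γ⁻¹(y m)` along an alternating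
sequence `σ = (y 0, …, y m)`, built from the components of `ξᵗ` and `ξᵝ`. -/
def altChain {L A R I : Type*} (a : L → A) (r : L → R) {γ : I → L}
    (ξτ : DescentFamily a γ) (ξβ : DescentFamily r γ) (b : Bool) (y : ℕ → L) :
    ∀ m : ℕ, AltSeq a r b m y → {c : I // γ c = y 0} → {c : I // γ c = y m}
  | 0, _ => id
  | (m + 1), hy =>
      (if h : (decide (m % 2 = 0)) = b then
        ξτ.map (y m) (y (m + 1))
          (by have := hy m (Nat.lt_succ_self m); rwa [if_pos h] at this)
      else
        ξβ.map (y m) (y (m + 1))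
          (by have := hy m (Nat.lt_succ_self m); rwa [if_neg h] at this)) ∘
      altChain a r ξτ ξβ b y m (fun i hi => hy i (Nat.lt_succ_of_lt hi))

open Function Relation

namespace DescentFamily

variable {E B C : Type*} {p : E → B} {γ : C → E}

lemma ext {ξ ξ' : DescentFamily p γ} (h : ∀ e e' he, ξ.map e e' he = ξ'.map e e' he) :
    ξ = ξ' := by
  cases ξ; cases ξ'; congr; funext e e' he; exact h e e' he

variable (ξ : DescentFamily p γ)

lemma map_self (e : E) (h : p e = p e) (c : {c // γ c = e}) : ξ.map e e h c = c := ξ.refl e c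

lemma map_map_symm {e e' : E} (h : p e = p e') (c : {c // γ c = e'}) :
    ξ.map e e' h (ξ.map e' e h.symm c) = c := by
  rw [ξ.comp, ξ.map_self]

lemma val_map_of_eq {e e' : E} (he : e = e') (h : p e = p e') (c : {c // γ c = e}) :
    (ξ.map e e' h c : C) = c := by
  subst he; rw [ξ.map_self]

def Rel (c c' : C) : Prop :=
  ∃ h : p (γ c) = p (γ c'), ξ.map (γ c) (γ c') h ⟨c, rfl⟩ = ⟨c', rfl⟩

variable {ξ}

lemma rel_map {e e' : E} (h : p e = p e') (c : {c // γ c = e}) :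
    ξ.Rel c (ξ.map e e' h c) := by
  obtain ⟨c, rfl⟩ := c
  generalize hd : ξ.map (γ c) e' h ⟨c, rfl⟩ = d
  obtain ⟨d, rfl⟩ := d
  exact ⟨h, hd⟩

lemma exists_rel {c : C} {e' : E} (h : p (γ c) = p e') : ∃ c', γ c' = e' ∧ ξ.Rel c c' :=
  ⟨_, (ξ.map _ e' h ⟨c, rfl⟩).2, rel_map h ⟨c, rfl⟩⟩

lemma Rel.symm {c c' : C} (h : ξ.Rel c c') : ξ.Rel c' c := by
  obtain ⟨h, hm⟩ := h
  exact ⟨h.symm, by rw [← hm, ξ.comp, ξ.map_self]⟩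

lemma Rel.trans {c c' c'' : C} (h : ξ.Rel c c') (h' : ξ.Rel c' c'') : ξ.Rel c c'' := by
  obtain ⟨h, hm⟩ := h
  obtain ⟨h', hm'⟩ := h'
  exact ⟨h.trans h', by rw [← ξ.comp _ _ _ h h', hm, hm']⟩

lemma Rel.eq_of_base_eq {c c' : C} (h : ξ.Rel c c') (hb : γ c = γ c') : c = c' := by
  obtain ⟨h, hm⟩ := h
  simpa [hm] using (ξ.val_map_of_eq hb h ⟨c, rfl⟩).symm

theorem ext_of_eqvGen {R : E → E → Prop} (hp : ∀ e e', p e = p e' ↔ EqvGen R e e')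
    {ξ ξ' : DescentFamily p γ}
    (h : ∀ e e' (hR : R e e'), ξ.map e e' ((hp e e').2 (.rel e e' hR)) =
      ξ'.map e e' ((hp e e').2 (.rel e e' hR))) : ξ = ξ' := by
  suffices ∀ e e', EqvGen R e e' → ∀ he, ξ.map e e' he = ξ'.map e e' he from
    ext fun e e' he => this e e' ((hp e e').1 he) he
  intro e e' hR
  induction hR with
  | rel e e' hR => exact fun _ => h e e' hR
  | refl e => exact fun _ => funext fun c => by rw [ξ.map_self, ξ'.map_self]
  | symm e e' _ ih =>
    refine fun he => funext fun c => ?_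
    calc ξ.map e' e he c = ξ'.map e' e he (ξ'.map e e' he.symm (ξ.map e' e he c)) :=
          (ξ'.map_map_symm he _).symm
      _ = ξ'.map e' e he c := by rw [← ih, ξ.map_map_symm he.symm]
  | trans e e' e'' h₁ h₂ ih₁ ih₂ =>
    intro he
    have he₁ := (hp e e').2 h₁
    have he₂ := (hp e' e'').2 h₂
    funext c
    rw [← ξ.comp _ _ _ he₁ he₂, ← ξ'.comp _ _ _ he₁ he₂, ih₁, ih₂]

section OfEquivalence

variable (Q : C → C → Prop) (hQ : Equivalence Q)
  (hinj : ∀ {c c'}, Q c c' → γ c = γ c' → c = c')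
  (hlift : ∀ c e', p (γ c) = p e' → ∃ c', γ c' = e' ∧ Q c c')

/-- The descent data sending `c` to the unique `Q`-related point of the target fibre. -/
noncomputable def ofEquivalence : DescentFamily p γ where
  map e e' h c :=
    ⟨(hlift c e' ((congrArg p c.2).trans h)).choose,
      (hlift c e' ((congrArg p c.2).trans h)).choose_spec.1⟩
  refl e c := by
    have spec := (hlift c e ((congrArg p c.2).trans rfl)).choose_spec
    exact Subtype.ext (hinj (hQ.symm spec.2) (spec.1.trans c.2.symm))
  comp e e' e'' h h' c := by
    have spec₁ := (hlift c e' ((congrArg p c.2).trans h)).choose_spec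
    have spec₂ := (hlift _ e'' ((congrArg p spec₁.1).trans h')).choose_spec
    have spec₃ := (hlift c e'' ((congrArg p c.2).trans (h.trans h'))).choose_spec
    exact Subtype.ext (hinj (hQ.trans (hQ.symm (hQ.trans spec₁.2 spec₂.2)) spec₃.2)
      (spec₂.1.trans spec₃.1.symm))

lemma ofEquivalence_map_eq {e e' : E} (h : p e = p e') (c : {c // γ c = e})
    (d : {d // γ d = e'}) (hcd : Q c d) : (ofEquivalence Q hQ hinj hlift).map e e' h c = d := by
  have spec := (hlift c e' ((congrArg p c.2).trans h)).choose_spec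
  exact Subtype.ext (hinj (hQ.trans (hQ.symm spec.2) hcd) (spec.1.trans d.2.symm))

end OfEquivalence

end DescentFamily

lemma SeparatedKernels.false_of_closed_alternating {L A R : Type*} {a : L → A} {r : L → R}
    (hsep : SeparatedKernels a r) (k : ℕ) (y : ℕ → L)
    (hne : ∀ j < 2 * k + 2, y j ≠ y (j + 1)) (hclosed : y (2 * k + 2) = y 0)
    (ha : ∀ i ≤ k, a (y (2 * i)) = a (y (2 * i + 1)))
    (hr : ∀ i ≤ k, r (y (2 * i + 1)) = r (y (2 * i + 2))) : False := by
  have hy : ∀ m ≤ 2 * k + 2, y ((m : ZMod (2 * k + 2)).val) = y m := by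
    intro m hm
    rw [ZMod.val_natCast]
    rcases hm.lt_or_eq with hm | rfl
    · rw [Nat.mod_eq_of_lt hm]
    · rw [Nat.mod_self, hclosed]
  refine hsep ⟨k, fun j => y j.val, fun j => ?_, fun i hi => ?_, fun i hi => ?_⟩
  · obtain ⟨m, hm, rfl⟩ : ∃ m < 2 * k + 2, ((m : ℕ) : ZMod (2 * k + 2)) = j :=
      ⟨j.val, ZMod.val_lt j, ZMod.natCast_zmod_val j⟩
    dsimp only
    rw [← Nat.cast_succ, hy m hm.le, hy (m + 1) hm]
    exact hne m hm
  · dsimp only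
    rw [hy _ (by omega), hy _ (by omega)]
    exact ha i hi
  · dsimp only
    rw [hy _ (by omega), hy _ (by omega)]
    exact hr i hi

lemma Bool.eq_ite_even_of_alternating {t : ℕ → Bool} {n : ℕ}
    (h : ∀ i < n, t i ≠ t (i + 1)) :
    ∀ i ≤ n, t i = if Even i then t 0 else !t 0 := by
  intro i hi
  induction i with
  | zero => simp
  | succ i ih =>
    have := h i (by omega)
    revert this
    rw [ih (by omega)]
    by_cases he : Even i <;> simp only [he, Nat.even_add_one, if_true, if_false,
      not_false_eq_true] <;> cases t 0 <;> cases t (i + 1) <;> decide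

section Walks

variable {L A R I : Type*} {a : L → A} {r : L → R} {γ : I → L}
  (ξτ : DescentFamily a γ) (ξβ : DescentFamily r γ)

def TypedRel : Bool → I → I → Prop
  | true => ξτ.Rel
  | false => ξβ.Rel

def JointRel (c c' : I) : Prop := ∃ t, TypedRel ξτ ξβ t c c'

def IsWalk (N : ℕ) (t : ℕ → Bool) (c : ℕ → I) : Prop :=
  ∀ i < N, TypedRel ξτ ξβ (t i) (c i) (c (i + 1))

variable {ξτ ξβ} {t : Bool} {u v w z : I}

lemma TypedRel.symm (h : TypedRel ξτ ξβ t u v) : TypedRel ξτ ξβ t v u := by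
  cases t
  exacts [DescentFamily.Rel.symm h, DescentFamily.Rel.symm h]

lemma TypedRel.trans (h : TypedRel ξτ ξβ t u v) (h' : TypedRel ξτ ξβ t v w) :
    TypedRel ξτ ξβ t u w := by
  cases t
  exacts [DescentFamily.Rel.trans h h', DescentFamily.Rel.trans h h']

lemma TypedRel.eq_of_base_eq (h : TypedRel ξτ ξβ t u v) (hb : γ u = γ v) : u = v := by
  cases t
  exacts [DescentFamily.Rel.eq_of_base_eq h hb, DescentFamily.Rel.eq_of_base_eq h hb]

lemma TypedRel.exists_of_base_eq (h : TypedRel ξτ ξβ t z w) (hb : γ u = γ z) :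
    ∃ e, γ e = γ w ∧ TypedRel ξτ ξβ t u e := by
  cases t
  exacts [DescentFamily.exists_rel (hb ▸ h.1), DescentFamily.exists_rel (hb ▸ h.1)]

lemma TypedRel.apply_eq_of_true (h : TypedRel ξτ ξβ t u v) (ht : t = true) :
    a (γ u) = a (γ v) := by
  subst ht; exact h.1

lemma TypedRel.apply_eq_of_false (h : TypedRel ξτ ξβ t u v) (ht : t = false) :
    r (γ u) = r (γ v) := by
  subst ht; exact h.1

lemma TypedRel.exists_splice (h : TypedRel ξτ ξβ t u v) (h' : TypedRel ξτ ξβ t w z)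
    (hb : γ u = γ z) : ∃ e, γ e = γ w ∧ TypedRel ξτ ξβ t e v ∧ (e = w → u = z) := by
  obtain ⟨e, he, hue⟩ := h'.symm.exists_of_base_eq hb
  refine ⟨e, he, hue.symm.trans h, ?_⟩
  rintro rfl
  exact (hue.trans h').eq_of_base_eq hb

variable {N : ℕ} {ts : ℕ → Bool} {c : ℕ → I}

lemma IsWalk.snoc (hw : IsWalk ξτ ξβ N ts c) (h : TypedRel ξτ ξβ t (c N) v) :
    IsWalk ξτ ξβ (N + 1) (update ts N t) (update c (N + 1) v) := by
  intro i hi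
  rcases Nat.lt_succ_iff_lt_or_eq.1 hi with hi | rfl
  · simpa [update_of_ne hi.ne, update_of_ne (by omega : i + 1 ≠ N + 1),
      update_of_ne (by omega : i ≠ N + 1)] using hw i hi
  · simpa [update_of_ne (by omega : i ≠ i + 1)] using h

lemma IsWalk.update_zero (hw : IsWalk ξτ ξβ N ts c) (h : TypedRel ξτ ξβ (ts 0) u (c 1)) :
    IsWalk ξτ ξβ N ts (update c 0 u) := by
  rintro (_ | i) hi
  · simpa using h
  · simpa using hw (i + 1) hi

lemma IsWalk.exists_shorten {n : ℕ} (hw : IsWalk ξτ ξβ (n + 2) ts c) {i : ℕ} (hi : i ≤ n)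
    (h : TypedRel ξτ ξβ t (c i) (c (i + 2))) :
    ∃ ts' c', IsWalk ξτ ξβ (n + 1) ts' c' ∧ c' 0 = c 0 ∧ c' (n + 1) = c (n + 2) := by
  refine ⟨fun j => if j < i then ts j else if j = i then t else ts (j + 1),
    fun j => if j ≤ i then c j else c (j + 1), fun j hj => ?_, by simp, by simp; omega⟩
  rcases lt_trichotomy j i with hji | rfl | hji
  · simpa [hji, hji.le, Nat.succ_le_of_lt hji] using hw j (by omega)
  · simpa using h
  · have hji' : ¬ j ≤ i := by omega
    simpa [hji', hji.ne', mt le_of_lt hji'] using hw (j + 1) (by omega)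

lemma IsWalk.false_of_alternating (hsep : SeparatedKernels a r) {n : ℕ}
    (hw : IsWalk ξτ ξβ (n + 2) ts c) (hne : ∀ i ≤ n + 1, γ (c i) ≠ γ (c (i + 1)))
    (halt : ∀ i < n + 1, ts i ≠ ts (i + 1)) (hend : ts 0 ≠ ts (n + 1))
    (hb : γ (c 0) = γ (c (n + 2))) : False := by
  have hts := Bool.eq_ite_even_of_alternating halt
  obtain ⟨k, rfl⟩ : 2 ∣ n := by
    rw [← even_iff_two_dvd]
    by_contra hodd
    exact hend (by rw [hts (n + 1) le_rfl, if_pos (Nat.even_add_one.2 hodd)])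
  have hτ : ∀ i ≤ 2 * k + 1, ts i = true → a (γ (c i)) = a (γ (c (i + 1))) :=
    fun i hi => (hw i (by omega)).apply_eq_of_true
  have hβ : ∀ i ≤ 2 * k + 1, ts i = false → r (γ (c i)) = r (γ (c (i + 1))) :=
    fun i hi => (hw i (by omega)).apply_eq_of_false
  cases h0 : ts 0
  · -- the walk starts with a `ξβ`-step, so read it backwards
    apply hsep.false_of_closed_alternating k (fun m => γ (c (2 * k + 2 - m)))
    · intro j hj
      convert (hne (2 * k + 1 - j) (by omega)).symm using 3 <;> omega
    · simpa using hb
    · intro i hi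
      convert (hτ (2 * (k - i) + 1) (by omega) ?_).symm using 4
      · omega
      · omega
      · simp [hts _ (by omega : 2 * (k - i) + 1 ≤ 2 * k + 1), h0]
    · intro i hi
      convert (hβ (2 * (k - i)) (by omega) ?_).symm using 4
      · omega
      · omega
      · simp [hts _ (by omega : 2 * (k - i) ≤ 2 * k + 1), h0]
  · apply hsep.false_of_closed_alternating k (fun m => γ (c m)) (fun j hj => hne j (by omega))
      hb.symm
    · intro i hi
      exact hτ (2 * i) (by omega) (by simp [hts _ (by omega : 2 * i ≤ 2 * k + 1), h0])
    · intro i hi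
      exact hβ (2 * i + 1) (by omega)
        (by simp [hts _ (by omega : 2 * i + 1 ≤ 2 * k + 1), h0])

theorem IsWalk.eq_of_base_eq (hsep : SeparatedKernels a r) (hw : IsWalk ξτ ξβ N ts c)
    (hb : γ (c 0) = γ (c N)) : c 0 = c N := by
  induction N using Nat.strong_induction_on generalizing ts c with
  | _ N IH =>
  obtain _ | _ | n := N
  · rfl
  · exact (hw 0 one_pos).eq_of_base_eq hb
  have shorten :
      ∀ i ≤ n, ∀ t, TypedRel ξτ ξβ t (c i) (c (i + 2)) → c 0 = c (n + 2) := by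
    intro i hi t h
    obtain ⟨ts', c', hw', h0, hN⟩ := hw.exists_shorten hi h
    rw [← h0, ← hN] at hb ⊢
    exact IH (n + 1) (by omega) hw' hb
  by_cases htriv : ∃ i ≤ n + 1, γ (c i) = γ (c (i + 1))
  · obtain ⟨i, hi, hγ⟩ := htriv
    have hc := (hw i (by omega)).eq_of_base_eq hγ
    rcases hi.lt_or_eq with hi | rfl
    · exact shorten i (by omega) (ts (i + 1)) (hc ▸ hw (i + 1) (by omega))
    · exact shorten n le_rfl (ts n) (hc ▸ hw n (by omega))
  by_cases hmerge : ∃ i < n + 1, ts i = ts (i + 1)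
  · obtain ⟨i, hi, ht⟩ := hmerge
    exact shorten i (by omega) (ts i) ((hw i (by omega)).trans (ht ▸ hw (i + 1) (by omega)))
  push Not at htriv hmerge
  by_cases hend : ts 0 = ts (n + 1)
  · obtain ⟨e, he, hstep, heq⟩ :=
      (hw 0 (by omega)).exists_splice (hend ▸ hw (n + 1) (by omega)) hb
    apply heq
    simpa using IH (n + 1) (by omega) (fun i hi => hw.update_zero hstep i (by omega))
      (by simpa using he)
  · exact (hw.false_of_alternating hsep htriv hmerge hend hb).elim

variable (ξτ ξβ)

lemma exists_isWalk_of_eqvGen {d d' : I} (h : EqvGen (JointRel ξτ ξβ) d d') :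
    ∃ N ts c, IsWalk ξτ ξβ N ts c ∧ c 0 = d ∧ c N = d' := by
  rw [← EqvGen.reflTransGen_symmGen] at h
  induction h with
  | refl =>
    exact ⟨0, fun _ => true, fun _ => d, fun _ hi => absurd hi (Nat.not_lt_zero _), rfl, rfl⟩
  | tail _ hstep ih =>
    obtain ⟨N, ts, c, hw, h0, rfl⟩ := ih
    obtain ⟨t, ht⟩ : ∃ t, TypedRel ξτ ξβ t (c N) _ :=
      hstep.elim id fun ⟨t, ht⟩ => ⟨t, ht.symm⟩
    exact ⟨N + 1, _, _, hw.snoc ht, by simpa using h0, by simp⟩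

theorem eq_of_eqvGen_of_base_eq (hsep : SeparatedKernels a r) {d d' : I}
    (h : EqvGen (JointRel ξτ ξβ) d d') (hb : γ d = γ d') : d = d' := by
  obtain ⟨N, ts, c, hw, rfl, rfl⟩ := exists_isWalk_of_eqvGen ξτ ξβ h
  exact hw.eq_of_base_eq hsep hb

lemma exists_eqvGen_of_eqvGen {x x' : L} (h : EqvGen (fun u v => a u = a v ∨ r u = r v) x x')
    {c : I} (hc : γ c = x) : ∃ c', γ c' = x' ∧ EqvGen (JointRel ξτ ξβ) c c' := by
  rw [← EqvGen.reflTransGen_symmGen] at h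
  induction h with
  | refl => exact ⟨c, hc, .refl c⟩
  | @tail _ v _ hstep ih =>
    obtain ⟨d, rfl, hcd⟩ := ih
    have hstep : a (γ d) = a v ∨ r (γ d) = r v := by
      rcases hstep with (h | h) | (h | h) <;> simp [h]
    rcases hstep with h | h
    · obtain ⟨e, he, hde⟩ := ξτ.exists_rel h
      exact ⟨e, he, hcd.trans _ _ _ (.rel _ _ ⟨true, hde⟩)⟩
    · obtain ⟨e, he, hde⟩ := ξβ.exists_rel h
      exact ⟨e, he, hcd.trans _ _ _ (.rel _ _ ⟨false, hde⟩)⟩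

lemma eqvGen_altChain (b : Bool) (y : ℕ → L) :
    ∀ m hy (c : {c // γ c = y 0}),
      EqvGen (JointRel ξτ ξβ) c (altChain a r ξτ ξβ b y m hy c) := by
  intro m
  induction m with
  | zero => exact fun _ c => .refl _
  | succ m ih =>
    intro hy c
    simp only [altChain, comp_apply]
    split
    · exact (ih _ c).trans _ _ _ (.rel _ _ ⟨true, DescentFamily.rel_map _ _⟩)
    · exact (ih _ c).trans _ _ _ (.rel _ _ ⟨false, DescentFamily.rel_map _ _⟩)

end Walks

/-- if `a` and `r` have no domain cycles and `ker s` is the equivalence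
relation generated by `ker a ∪ ker r`, then for descent data `ξᵗ` relative to `a` and
`ξᵝ` relative to `r` over a common `γ : I → L`, the composite bijection along an
alternating sequence depends only on the endpoints, and consequently `ξᵗ` and `ξᵝ`
extend to a unique common descent data relative to `s`. -/
theorem alternating_composite_well_defined_and_unique_extension
    {L A R S I : Type*} (a : L → A) (r : L → R) (s : L → S)
    (hker : ∀ x x' : L, s x = s x' ↔
      Relation.EqvGen (fun u v => a u = a v ∨ r u = r v) x x')
    (hsep : SeparatedKernels a r)
    (γ : I → L) (ξτ : DescentFamily a γ) (ξβ : DescentFamily r γ) :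
    (∀ (b b' : Bool) (m n : ℕ) (y y' : ℕ → L)
      (hy : AltSeq a r b m y) (hy' : AltSeq a r b' n y')
      (h0 : y 0 = y' 0) (hm : y m = y' n) (c : I) (hc : γ c = y 0),
        (altChain a r ξτ ξβ b y m hy ⟨c, hc⟩ : I) =
        (altChain a r ξτ ξβ b' y' n hy' ⟨c, hc.trans h0⟩ : I)) ∧
    (∃! ξ : DescentFamily s γ,
      (∀ (x x' : L) (h : a x = a x'),
        ξ.map x x' ((hker x x').mpr (Relation.EqvGen.rel x x' (Or.inl h))) =
          ξτ.map x x' h) ∧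
      (∀ (x x' : L) (h : r x = r x'),
        ξ.map x x' ((hker x x').mpr (Relation.EqvGen.rel x x' (Or.inr h))) =
          ξβ.map x x' h)) := by
  have hinj : ∀ {d d'}, EqvGen (JointRel ξτ ξβ) d d' → γ d = γ d' → d = d' :=
    eq_of_eqvGen_of_base_eq ξτ ξβ hsep
  set ξ := DescentFamily.ofEquivalence (EqvGen (JointRel ξτ ξβ)) (EqvGen.is_equivalence _) hinj
    fun c x' h => exists_eqvGen_of_eqvGen ξτ ξβ ((hker _ _).1 h) rfl
  have hτ : ∀ x x' (h : a x = a x'), ξ.map x x' ((hker x x').2 (.rel x x' (.inl h))) =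
      ξτ.map x x' h := fun x x' h => funext fun c =>
    DescentFamily.ofEquivalence_map_eq _ _ _ _ _ _ _
      (.rel _ _ ⟨true, DescentFamily.rel_map h c⟩)
  have hβ : ∀ x x' (h : r x = r x'), ξ.map x x' ((hker x x').2 (.rel x x' (.inr h))) =
      ξβ.map x x' h := fun x x' h => funext fun c =>
    DescentFamily.ofEquivalence_map_eq _ _ _ _ _ _ _
      (.rel _ _ ⟨false, DescentFamily.rel_map h c⟩)
  refine ⟨fun b b' m n y y' hy hy' h0 hm c hc => hinj ?_ ?_, ξ, ⟨hτ, hβ⟩, ?_⟩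
  · exact (eqvGen_altChain ξτ ξβ b y m hy _).symm.trans _ _ _
      (eqvGen_altChain ξτ ξβ b' y' n hy' ⟨c, hc.trans h0⟩)
  · rw [(altChain a r ξτ ξβ b y m hy _).2, (altChain a r ξτ ξβ b' y' n hy' _).2, hm]
  · rintro ξ' ⟨hτ', hβ'⟩
    refine DescentFamily.ext_of_eqvGen hker fun x x' hR => ?_
    rcases hR with h | h
    exacts [(hτ' x x' h).trans (hτ x x' h).symm, (hβ' x x' h).trans (hβ x x' h).symm]
end
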